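/- arXiv:1306.6657 — 4 statements merged into one kernel-verified Lean document; each statement's English description precedes it below -/
import Mathlib

section
/- The until operator can be eliminated using propositional quantification: for all infinite sequences σ over 2^AP and QPTL/LTL formulas ψ, ψ', σ ⊨ ψ U ψ' if and only if σ ⊨ ∃t. t ∧ □(t → ψ' ∨ (ψ ∧ ○t)) ∧ ¬□t, where t is a fresh proposition not occurring in ψ or ψ'. -/
/-- QPTL formulas (LTL with until and quantification over atomic propositions). -/
inductive QF (A : Type) : Type
  | atom : A → QF A
  | neg : QF A → QF A
  | or : QF A → QF A → QF A
  | next : QF A → QF A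
  | until_ : QF A → QF A → QF A
  | exq : A → QF A → QF A

/-- QPTL satisfaction over infinite sequences in `(2^A)^ω`. -/
def qsat {A : Type} : (ℕ → Set A) → QF A → Prop
  | σ, .atom a => a ∈ σ 0
  | σ, .neg ψ => ¬ qsat σ ψ
  | σ, .or ψ ψ' => qsat σ ψ ∨ qsat σ ψ'
  | σ, .next ψ => qsat (fun n => σ (n+1)) ψ
  | σ, .until_ ψ ψ' =>
      ∃ i, qsat (fun n => σ (n+i)) ψ' ∧ ∀ j < i, qsat (fun n => σ (n+j)) ψ
  | σ, .exq p ψ => ∃ σ' : ℕ → Set A, (∀ i a, a ≠ p → (a ∈ σ' i ↔ a ∈ σ i)) ∧ qsat σ' ψ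

/-- `t` occurs in a formula (as an atom or as a bound proposition). -/
def occurs {A : Type} (t : A) : QF A → Prop
  | .atom a => a = t
  | .neg ψ => occurs t ψ
  | .or ψ ψ' => occurs t ψ ∨ occurs t ψ'
  | .next ψ => occurs t ψ
  | .until_ ψ ψ' => occurs t ψ ∨ occurs t ψ'
  | .exq p ψ => p = t ∨ occurs t ψ

/-- Conjunction, derived. -/
def qand {A : Type} (φ ψ : QF A) : QF A := .neg (.or (.neg φ) (.neg ψ))

/-- Implication, derived. -/
def qimp {A : Type} (φ ψ : QF A) : QF A := .or (.neg φ) ψ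

/-- `□φ ≡ ¬(true U ¬φ)`, with `true ≡ t ∨ ¬t`. -/
def qbox {A : Type} (t : A) (φ : QF A) : QF A :=
  .neg (.until_ (.or (.atom t) (.neg (.atom t))) (.neg φ))

theorem qsat_congr {A : Type} {t : A} : ∀ (φ : QF A), ¬ occurs t φ →
    ∀ (σ σ' : ℕ → Set A), (∀ i a, a ≠ t → (a ∈ σ' i ↔ a ∈ σ i)) →
    (qsat σ' φ ↔ qsat σ φ)
  | .atom a, h, σ, σ', hag => hag 0 a h
  | .neg φ, h, σ, σ', hag => not_congr (qsat_congr φ h σ σ' hag)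
  | .or φ φ', h, σ, σ', hag =>
      or_congr (qsat_congr φ (fun hh => h (Or.inl hh)) σ σ' hag)
        (qsat_congr φ' (fun hh => h (Or.inr hh)) σ σ' hag)
  | .next φ, h, σ, σ', hag =>
      qsat_congr φ h _ _ (fun i a ha => hag (i+1) a ha)
  | .until_ φ φ', h, σ, σ', hag => by
      simp only [qsat]
      refine exists_congr fun i => and_congr ?_ (forall₂_congr fun j _ => ?_)
      · exact qsat_congr φ' (fun hh => h (Or.inr hh)) _ _ (fun n a ha => hag (n+i) a ha)
      · exact qsat_congr φ (fun hh => h (Or.inl hh)) _ _ (fun n a ha => hag (n+j) a ha)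
  | .exq p φ, h, σ, σ', hag => by
      classical
      have hpt : p ≠ t := fun hh => h (Or.inl hh)
      have hφ : ¬ occurs t φ := fun hh => h (Or.inr hh)
      simp only [qsat]
      constructor
      · rintro ⟨τ, hτ, hq⟩
        refine ⟨fun n => {a | if a = p then a ∈ τ n else a ∈ σ n}, ?_, ?_⟩
        · intro i a ha
          simp only [Set.mem_setOf_eq, if_neg ha]
        · rw [qsat_congr φ hφ τ _ ?_]
          · exact hq
          · intro i a ha
            simp only [Set.mem_setOf_eq]
            by_cases hp : a = p
            · simp [hp]
            · simp only [if_neg hp]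
              exact (hag i a ha).symm.trans (hτ i a hp).symm
      · rintro ⟨τ, hτ, hq⟩
        refine ⟨fun n => {a | if a = p then a ∈ τ n else a ∈ σ' n}, ?_, ?_⟩
        · intro i a ha
          simp only [Set.mem_setOf_eq, if_neg ha]
        · rw [qsat_congr φ hφ τ _ ?_]
          · exact hq
          · intro i a ha
            simp only [Set.mem_setOf_eq]
            by_cases hp : a = p
            · simp [hp]
            · simp only [if_neg hp]
              exact (hag i a ha).trans (hτ i a hp).symm

/-- elimination of until via propositional quantification:
`σ ⊨ ψ U ψ'  ↔  σ ⊨ ∃t. t ∧ □(t → ψ' ∨ (ψ ∧ ○t)) ∧ ¬□t` for fresh `t`. -/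
theorem until_elim {A : Type} (σ : ℕ → Set A) (ψ ψ' : QF A) (t : A)
    (hψ : ¬ occurs t ψ) (hψ' : ¬ occurs t ψ') :
    qsat σ (.until_ ψ ψ') ↔
      qsat σ (.exq t (qand (.atom t)
        (qand (qbox t (qimp (.atom t) (.or ψ' (qand ψ (.next (.atom t))))))
          (.neg (qbox t (.atom t)))))) := by
  classical
  simp only [qsat, qand, qimp, qbox, not_or, not_not, not_exists, not_forall, not_and,
    zero_add]
  constructor
  · rintro ⟨i, hi, hj⟩
    refine ⟨fun n => {a | if a = t then n ≤ i else a ∈ σ n}, ?_, ?_, ⟨?_, ?_⟩⟩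
    · intro n a ha
      simp [if_neg ha]
    · simp
    · rintro x ⟨hx1, hx2, hx3⟩
      simp only [Set.mem_setOf_eq, if_pos rfl] at hx1 hx3
      exfalso
      rcases eq_or_lt_of_le hx1 with h | h
      · subst h
        exact hx2 ((qsat_congr ψ' hψ' _ _ (fun n a ha => by simp [if_neg ha])).mpr hi)
      · refine hx3 ((qsat_congr ψ hψ _ _ (fun n a ha => by simp [if_neg ha])).mpr (hj x h)) ?_
        simp only [if_true]
        omega
    · exact ⟨i + 1, by simp, fun _ _ h => h⟩
  · rintro ⟨σ', hag, ht0, hbox, x0, hx0, -⟩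
    have key : ∀ x, t ∈ σ' x → qsat (fun n => σ' (n + x)) ψ' ∨
        (qsat (fun n => σ' (n + x)) ψ ∧ t ∈ σ' (1 + x)) := by
      intro x hx
      by_contra h
      push_neg at h
      obtain ⟨x2, -, hn, hp⟩ := hbox x ⟨hx, h.1, fun hp => h.2 hp⟩
      exact hn hp
    have hex : ∃ k, t ∉ σ' k := ⟨x0, hx0⟩
    have hmem : t ∉ σ' (Nat.find hex) := Nat.find_spec hex
    have hlt : ∀ k < Nat.find hex, t ∈ σ' k := fun k hk => not_not.mp (Nat.find_min hex hk)
    have hm0 : Nat.find hex ≠ 0 := fun h => hmem (h ▸ ht0)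
    have hpm : qsat (fun n => σ' (n + (Nat.find hex - 1))) ψ' := by
      rcases key (Nat.find hex - 1) (hlt _ (by omega)) with h | ⟨-, h⟩
      · exact h
      · exact absurd h (by rw [show 1 + (Nat.find hex - 1) = Nat.find hex by omega]; exact hmem)
    have hex2 : ∃ j, qsat (fun n => σ' (n + j)) ψ' := ⟨_, hpm⟩
    have hjψ' : qsat (fun n => σ' (n + Nat.find hex2)) ψ' := Nat.find_spec hex2
    have hjm : Nat.find hex2 ≤ Nat.find hex - 1 := Nat.find_le hpm
    refine ⟨Nat.find hex2,
      (qsat_congr ψ' hψ' _ _ (fun n a ha => hag (n + Nat.find hex2) a ha)).symm.mpr hjψ', ?_⟩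
    intro k hk
    have htk : t ∈ σ' k := hlt k (by omega)
    rcases key k htk with h | ⟨h, -⟩
    · exact absurd h (Nat.find_min hex2 hk)
    · exact (qsat_congr ψ hψ _ _ (fun n a ha => hag (n + k) a ha)).mp h
end

section
/- The Hamming-distance formula is correct: for paths π, π' and a set P ⊆ AP, ⟨π,π'⟩ satisfies Ham_P(d, π, π') (defined by Ham_P(0,π,π') = (π =_P π') and Ham_P(d,π,π') = (π[0] =_P π'[0]) W ((π[0] ≠_P π'[0]) ∧ ○Ham_P(d−1,π,π'))) if and only if the number of positions i with π[i] ∩ P ≠ π'[i] ∩ P is at most d. -/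
/-- `π[i] =_P π'[i]`: the two labelings agree on `P` at position `i`. -/
def eqP {AP : Type} (P : Set AP) (π π' : ℕ → Set AP) (i : ℕ) : Prop :=
  π i ∩ P = π' i ∩ P

/-- Semantics of the Hamming-distance formula `Ham_P(d,π,π')` evaluated from offset `k`:
`Ham_P(0,π,π') = (π =_P π')` and
`Ham_P(d+1,π,π') = (π[0] =_P π'[0]) W ((π[0] ≠_P π'[0]) ∧ ○ Ham_P(d,π,π'))`,
where `φ₁ W φ₂` has the weak-until semantics. -/
def Ham {AP : Type} (P : Set AP) (π π' : ℕ → Set AP) : ℕ → ℕ → Prop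
  | 0 => fun k => ∀ i, eqP P π π' (k + i)
  | (d+1) => fun k =>
      (∃ i, (¬ eqP P π π' (k + i) ∧ Ham P π π' d (k + i + 1)) ∧
          ∀ j < i, eqP P π π' (k + j)) ∨
        ∀ i, eqP P π π' (k + i)

private lemma ham_iff {AP : Type} (P : Set AP) (π π' : ℕ → Set AP) (d : ℕ) :
    ∀ k, Ham P π π' d k ↔
      {i : ℕ | k ≤ i ∧ π i ∩ P ≠ π' i ∩ P}.encard ≤ (d : ℕ∞) := by
  classical
  induction d with
  | zero =>
    intro k
    simp only [Ham, Nat.cast_zero, nonpos_iff_eq_zero, Set.encard_eq_zero]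
    constructor
    · intro h
      ext x
      simp only [Set.mem_setOf_eq, Set.mem_empty_iff_false, iff_false, not_and, not_not]
      intro hx
      have := h (x - k)
      rwa [eqP, Nat.add_sub_cancel' hx] at this
    · intro h i
      have : k + i ∉ ({} : Set ℕ) := Set.notMem_empty _
      rw [← h] at this
      simp only [Set.mem_setOf_eq, not_and, not_not] at this
      exact this (Nat.le_add_right _ _)
  | succ d ih =>
    intro k
    constructor
    · rintro (⟨i, ⟨hne, hham⟩, hbefore⟩ | hall)
      · have hT' := (ih (k + i + 1)).mp hham
        have hsub : {x : ℕ | k ≤ x ∧ π x ∩ P ≠ π' x ∩ P} ⊆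
            insert (k + i) {x : ℕ | k + i + 1 ≤ x ∧ π x ∩ P ≠ π' x ∩ P} := by
          rintro x ⟨hkx, hx⟩
          rcases lt_trichotomy x (k + i) with h | h | h
          · exfalso
            have hj : x - k < i := by omega
            have := hbefore (x - k) hj
            rw [eqP, Nat.add_sub_cancel' hkx] at this
            exact hx this
          · exact Or.inl h
          · exact Or.inr ⟨by omega, hx⟩
        calc Set.encard {x : ℕ | k ≤ x ∧ π x ∩ P ≠ π' x ∩ P}
            ≤ _ := Set.encard_le_encard hsub
          _ ≤ Set.encard {x : ℕ | k + i + 1 ≤ x ∧ π x ∩ P ≠ π' x ∩ P} + 1 :=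
            Set.encard_insert_le _ _
          _ ≤ (d : ℕ∞) + 1 := by exact add_le_add_left hT' 1
          _ = ((d + 1 : ℕ) : ℕ∞) := by push_cast; ring
      · have : {i : ℕ | k ≤ i ∧ π i ∩ P ≠ π' i ∩ P} = ∅ := by
          ext x
          simp only [Set.mem_setOf_eq, Set.mem_empty_iff_false, iff_false, not_and, not_not]
          intro hx
          have := hall (x - k)
          rwa [eqP, Nat.add_sub_cancel' hx] at this
        rw [this, Set.encard_empty]
        exact zero_le
    · intro h
      by_cases he : {i : ℕ | k ≤ i ∧ π i ∩ P ≠ π' i ∩ P} = ∅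
      · right
        intro i
        have : k + i ∉ ({} : Set ℕ) := Set.notMem_empty _
        rw [← he] at this
        simp only [Set.mem_setOf_eq, not_and, not_not] at this
        exact this (Nat.le_add_right _ _)
      · left
        rw [Set.eq_empty_iff_forall_notMem] at he
        push_neg at he
        have hex : ∃ m, m ∈ {i : ℕ | k ≤ i ∧ π i ∩ P ≠ π' i ∩ P} := he
        set m := Nat.find hex with hmdef
        obtain ⟨hkm, hdiff⟩ := Nat.find_spec hex
        refine ⟨m - k, ⟨?_, ?_⟩, ?_⟩
        · rw [eqP, Nat.add_sub_cancel' hkm]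
          exact hdiff
        · rw [Nat.add_sub_cancel' hkm]
          apply (ih (m + 1)).mpr
          have hnm : m ∉ {x : ℕ | m + 1 ≤ x ∧ π x ∩ P ≠ π' x ∩ P} := by
            simp
          have hsub : insert m {x : ℕ | m + 1 ≤ x ∧ π x ∩ P ≠ π' x ∩ P} ⊆
              {x : ℕ | k ≤ x ∧ π x ∩ P ≠ π' x ∩ P} := by
            rintro x (rfl | ⟨hx1, hx2⟩)
            · exact ⟨hkm, hdiff⟩
            · exact ⟨by omega, hx2⟩
          have h1 : Set.encard {x : ℕ | m + 1 ≤ x ∧ π x ∩ P ≠ π' x ∩ P} + 1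
              ≤ ((d : ℕ∞)) + 1 := by
            rw [← Set.encard_insert_of_notMem hnm]
            calc _ ≤ Set.encard {x : ℕ | k ≤ x ∧ π x ∩ P ≠ π' x ∩ P} :=
                  Set.encard_le_encard hsub
              _ ≤ ((d + 1 : ℕ) : ℕ∞) := h
              _ = (d : ℕ∞) + 1 := by push_cast; ring
          exact ENat.add_le_add_iff_right (by simp) |>.mp h1
        · intro j hj
          have hlt : k + j < m := by omega
          have := Nat.find_min hex hlt
          simp only [Set.mem_setOf_eq, not_and, not_not] at this
          exact this (Nat.le_add_right _ _)

/-- STATEMENT 7': the Hamming-distance formula is correct: `Ham_P(d,π,π')` holds iff the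
number of positions at which `π` and `π'` differ on `P` is at most `d`. -/
theorem ham_correct {AP : Type} (P : Set AP) (π π' : ℕ → Set AP) (d : ℕ) :
    Ham P π π' d 0 ↔ {i : ℕ | π i ∩ P ≠ π' i ∩ P}.encard ≤ (d : ℕ∞) := by
  have := ham_iff P π π' d 0
  simpa using this
end

section
/- For a deterministic synchronous system, the quantitative-information-flow bound formula is correct: K ⊨ ¬∃π₀…∃π_{2^n}. (⋀ᵢ πᵢ =_I π₀) ∧ ⋀_{i≠j} πᵢ ≠_O πⱼ holds if and only if for every input sequence, the number of distinct output sequences produced by paths of K with that input is at most 2^n. -/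
/-- A Kripke structure. -/
structure Kripke (S AP : Type) where
  init : S
  trans : S → Set S
  label : S → Set AP

/-- Paths of a Kripke structure from a state `s`. -/
def PathsFrom {S AP : Type} (K : Kripke S AP) (s : S) : Set (ℕ → S × Set AP) :=
  {π | (π 0).1 = s ∧ (∀ i, (π (i+1)).1 ∈ K.trans (π i).1) ∧ ∀ i, (π i).2 = K.label (π i).1}

/-- The trace of a path restricted to the propositions in `P`. -/
def restrTr {S AP : Type} (P : Set AP) (π : ℕ → S × Set AP) : ℕ → Set AP :=
  fun i => (π i).2 ∩ P

/-- for a deterministic synchronous system (outputs determined by the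
public inputs `I` together with the secret inputs `H`), the quantitative-information-flow
formula `¬∃π₀…π_{2^n}. (⋀ᵢ πᵢ =_I π₀) ∧ ⋀_{i≠j} πᵢ ≠_O πⱼ` holds iff for every input
sequence, the number of distinct output sequences of paths with that input is at most
`2^n`. -/
theorem qif_bound_correct {S AP : Type} (K : Kripke S AP) (I H O : Set AP) (n : ℕ)
    (hdet : ∀ π ∈ PathsFrom K K.init, ∀ π' ∈ PathsFrom K K.init,
      (∀ i, (π i).2 ∩ (I ∪ H) = (π' i).2 ∩ (I ∪ H)) →
        ∀ i, (π i).2 ∩ O = (π' i).2 ∩ O) :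
    (¬ ∃ f : Fin (2 ^ n + 1) → (ℕ → S × Set AP),
        (∀ i, f i ∈ PathsFrom K K.init) ∧
        (∀ i, restrTr I (f i) = restrTr I (f 0)) ∧
        (∀ i j, i ≠ j → restrTr O (f i) ≠ restrTr O (f j))) ↔
      ∀ σ : ℕ → Set AP,
        {τ | ∃ π ∈ PathsFrom K K.init, restrTr I π = σ ∧ restrTr O π = τ}.encard
          ≤ (2 ^ n : ℕ∞) := by
  constructor
  · intro hno σ
    by_contra hgt
    push_neg at hgt
    have hle : ((2 ^ n + 1 : ℕ) : ℕ∞) ≤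
        {τ | ∃ π ∈ PathsFrom K K.init, restrTr I π = σ ∧ restrTr O π = τ}.encard := by
      have := Order.add_one_le_of_lt hgt
      simpa using this
    obtain ⟨t, hts, htcard⟩ := Set.exists_subset_encard_eq hle
    have htfin : t.Finite := Set.finite_of_encard_eq_coe htcard
    haveI : Finite t := htfin
    have hnat : Nat.card t = 2 ^ n + 1 := by
      rw [Nat.card_coe_set_eq, Set.ncard, htcard]; exact ENat.toNat_coe _
    have e : Fin (2 ^ n + 1) ≃ t := by
      rw [← hnat]; exact (Finite.equivFin t).symm
    choose g hg hgi hgo using fun i : Fin (2 ^ n + 1) => hts (e i).2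
    apply hno
    refine ⟨g, hg, fun i => by rw [hgi i, hgi 0], fun i j hij hcon => hij ?_⟩
    have : (e i : ℕ → Set AP) = e j := by rw [← hgo i, ← hgo j, hcon]
    exact e.injective (Subtype.ext this)
  · rintro hb ⟨f, hf, hI, hO⟩
    set T := {τ | ∃ π ∈ PathsFrom K K.init, restrTr I π = restrTr I (f 0) ∧ restrTr O π = τ}
    have hsub : Set.range (fun i => restrTr O (f i)) ⊆ T :=
      fun τ ⟨i, hi⟩ => ⟨f i, hf i, hI i, hi⟩
    have hinj : Function.Injective (fun i : Fin (2 ^ n + 1) => restrTr O (f i)) := by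
      intro i j h
      by_contra hij
      exact hO i j hij h
    have hcard : (Set.range (fun i : Fin (2 ^ n + 1) => restrTr O (f i))).encard
        = (2 ^ n + 1 : ℕ) := by
      rw [← Set.image_univ, hinj.encard_image, Set.encard_univ]
      simp [ENat.card_eq_coe_fintype_card]
    have := (Set.encard_mono hsub).trans (hb (restrTr I (f 0)))
    rw [hcard] at this
    norm_cast at this
    omega
end

section
/- The distributed synthesis reduction is sound: if finite (resp. arbitrary) transition systems T₁ with inputs I₁, outputs O₁ and T₂ with inputs I₂, outputs O₂ exist whose synchronous product satisfies the LTL formula φ on all paths, then the Kripke structure given by that product satisfies the HyperCTL conjunction ψ₁ ∧ ψ₂ ∧ ψ₃, where ψ₁ = ∀π.[φ]_π, ψ₂ = ∀π.□ ⋀_{I ⊆ I₁∪I₂} ∃π'.○(⋀_{i∈I} i_{π'} ∧ ⋀_{i∉I} ¬i_{π'}), and ψ₃ = ∀π.∀π'. (π =_{I₁} π' → π =_{O₁} π') ∧ (π =_{I₂} π' → π =_{O₂} π'). -/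
/-- HyperCTL formulas; atomic propositions are indexed by the (de Bruijn level) index
of the path variable in the current path tuple. -/
inductive HFormula (AP : Type) : Type
  | atom : AP → ℕ → HFormula AP
  | neg  : HFormula AP → HFormula AP
  | or   : HFormula AP → HFormula AP → HFormula AP
  | next : HFormula AP → HFormula AP
  | until_ : HFormula AP → HFormula AP → HFormula AP
  | exists_ : HFormula AP → HFormula AP

/-- Shifting a path tuple: `shiftA Γ i` is `Γ[i,∞]`. -/
def shiftA {S AP : Type} (Γ : List (ℕ → S × Set AP)) (i : ℕ) : List (ℕ → S × Set AP) :=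
  Γ.map (fun π n => π (n + i))

/-- The state where newly quantified paths start: the first state of the last path of the
tuple, or the initial state if the tuple is empty. -/
def startOf {S AP : Type} (K : Kripke S AP) (Γ : List (ℕ → S × Set AP)) : S :=
  match Γ.getLast? with
  | some π => (π 0).1
  | none => K.init

/-- Satisfaction relation of HyperCTL. -/
def sat {S AP : Type} (K : Kripke S AP) : List (ℕ → S × Set AP) → HFormula AP → Prop
  | Γ, .atom a k => ∃ π, Γ[k]? = some π ∧ a ∈ (π 0).2
  | Γ, .neg φ => ¬ sat K Γ φ
  | Γ, .or φ ψ => sat K Γ φ ∨ sat K Γ ψ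
  | Γ, .next φ => sat K (shiftA Γ 1) φ
  | Γ, .until_ φ ψ => ∃ i, sat K (shiftA Γ i) ψ ∧ ∀ j < i, sat K (shiftA Γ j) φ
  | Γ, .exists_ φ => ∃ π ∈ PathsFrom K (startOf K Γ), sat K (Γ ++ [π]) φ

/-- LTL formulas. -/
inductive LTL (AP : Type) : Type
  | atom : AP → LTL AP
  | neg : LTL AP → LTL AP
  | or : LTL AP → LTL AP → LTL AP
  | next : LTL AP → LTL AP
  | until_ : LTL AP → LTL AP → LTL AP

/-- LTL satisfaction over infinite sequences of subsets of `AP`. -/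
def lsat {AP : Type} : (ℕ → Set AP) → LTL AP → Prop
  | σ, .atom a => a ∈ σ 0
  | σ, .neg φ => ¬ lsat σ φ
  | σ, .or φ ψ => lsat σ φ ∨ lsat σ ψ
  | σ, .next φ => lsat (fun n => σ (n+1)) φ
  | σ, .until_ φ ψ => ∃ i, lsat (fun n => σ (n+i)) ψ ∧ ∀ j < i, lsat (fun n => σ (n+j)) φ

/-- The synchronous product of two transition systems given by output functions
`f₁, f₂` on input histories: states are input histories, every input valuation
`J ⊆ I₁ ∪ I₂` is enabled at every step, and the label combines the last input with the
outputs of both components on the current history. -/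
def productK {AP : Type} (I₁ I₂ : Set AP) (f₁ f₂ : List (Set AP) → Set AP) :
    Kripke (List (Set AP)) AP where
  init := []
  trans := fun h => {h' | ∃ J, J ⊆ I₁ ∪ I₂ ∧ h' = h ++ [J]}
  label := fun h => (h.getLast?.getD ∅) ∩ (I₁ ∪ I₂) ∪ f₁ h ∪ f₂ h

lemma lab_in {AP : Type} (A U I f g : Set AP) (hI : I ⊆ U)
    (hf : ∀ x ∈ f, x ∉ I) (hg : ∀ x ∈ g, x ∉ I) :
    (A ∩ U ∪ f ∪ g) ∩ I = A ∩ I := by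
  ext x
  have h1 := hf x; have h2 := hg x; have h3 := @hI x
  simp only [Set.mem_inter_iff, Set.mem_union]
  tauto

lemma lab_out {AP : Type} (A U O f g : Set AP) (hU : ∀ x ∈ U, x ∉ O)
    (hf : f ⊆ O) (hg : ∀ x ∈ g, x ∉ O) :
    (A ∩ U ∪ f ∪ g) ∩ O = f := by
  ext x
  have h1 := @hf x; have h2 := hg x; have h3 := hU x
  simp only [Set.mem_inter_iff, Set.mem_union]
  tauto

/-- soundness of the distributed-synthesis reduction: if the synchronous
product of two components with disjoint variables (component `k` outputs into `Oₖ` as a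
function of the `Iₖ`-restriction of the input history) satisfies `φ` on all paths, then
the product Kripke structure satisfies `ψ₁ ∧ ψ₂ ∧ ψ₃`:
`ψ₁ = ∀π.[φ]_π`;
`ψ₂ = ∀π.□⋀_{J⊆I₁∪I₂}∃π'.○(⋀_{i∈J} i_{π'} ∧ ⋀_{i∉J} ¬i_{π'})`;
`ψ₃ = ∀π.∀π'.(π =_{I₁} π' → π =_{O₁} π') ∧ (π =_{I₂} π' → π =_{O₂} π')`. -/
theorem distributed_synthesis_sound {AP : Type} (I₁ I₂ O₁ O₂ : Set AP)
    (hI : Disjoint I₁ I₂) (hO : Disjoint O₁ O₂)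
    (hIO : Disjoint (I₁ ∪ I₂) (O₁ ∪ O₂))
    (f₁ f₂ : List (Set AP) → Set AP)
    (hf₁O : ∀ h, f₁ h ⊆ O₁) (hf₂O : ∀ h, f₂ h ⊆ O₂)
    (hf₁ : ∀ h h', h.map (· ∩ I₁) = h'.map (· ∩ I₁) → f₁ h = f₁ h')
    (hf₂ : ∀ h h', h.map (· ∩ I₂) = h'.map (· ∩ I₂) → f₂ h = f₂ h')
    (φ : LTL AP)
    (hφ : ∀ π ∈ PathsFrom (productK I₁ I₂ f₁ f₂) (productK I₁ I₂ f₁ f₂).init,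
      lsat (fun n => (π n).2) φ) :
    (∀ π ∈ PathsFrom (productK I₁ I₂ f₁ f₂) (productK I₁ I₂ f₁ f₂).init,
        lsat (fun n => (π n).2) φ) ∧
    (∀ π ∈ PathsFrom (productK I₁ I₂ f₁ f₂) (productK I₁ I₂ f₁ f₂).init,
        ∀ i : ℕ, ∀ J ⊆ I₁ ∪ I₂,
          ∃ π' ∈ PathsFrom (productK I₁ I₂ f₁ f₂) ((π i).1),
            (π' 1).2 ∩ (I₁ ∪ I₂) = J) ∧
    (∀ π ∈ PathsFrom (productK I₁ I₂ f₁ f₂) (productK I₁ I₂ f₁ f₂).init,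
        ∀ π' ∈ PathsFrom (productK I₁ I₂ f₁ f₂) (productK I₁ I₂ f₁ f₂).init,
          ((∀ i, (π i).2 ∩ I₁ = (π' i).2 ∩ I₁) →
              ∀ i, (π i).2 ∩ O₁ = (π' i).2 ∩ O₁) ∧
          ((∀ i, (π i).2 ∩ I₂ = (π' i).2 ∩ I₂) →
              ∀ i, (π i).2 ∩ O₂ = (π' i).2 ∩ O₂)) := by
  set K := productK I₁ I₂ f₁ f₂ with hK
  have hIO₁ : ∀ x ∈ I₁ ∪ I₂, x ∉ O₁ := fun x hx hx' =>
    (Set.disjoint_left.mp hIO hx) (Or.inl hx')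
  have hIO₂ : ∀ x ∈ I₁ ∪ I₂, x ∉ O₂ := fun x hx hx' =>
    (Set.disjoint_left.mp hIO hx) (Or.inr hx')
  have hf₁I : ∀ h, ∀ x ∈ f₁ h, x ∉ I₁ ∪ I₂ := fun h x hx hx' =>
    hIO₁ x hx' (hf₁O h hx)
  have hf₂I : ∀ h, ∀ x ∈ f₂ h, x ∉ I₁ ∪ I₂ := fun h x hx hx' =>
    hIO₂ x hx' (hf₂O h hx)
  -- labels of states:
  have hlab : ∀ h : List (Set AP),
      K.label h = (h.getLast?.getD ∅) ∩ (I₁ ∪ I₂) ∪ f₁ h ∪ f₂ h := fun _ => rfl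
  refine ⟨hφ, ?_, ?_⟩
  · -- ψ₂
    intro π hπ i J hJ
    set h := (π i).1 with hh
    refine ⟨fun n => (h ++ List.replicate n J,
      K.label (h ++ List.replicate n J)), ⟨?_, ?_, fun _ => rfl⟩, ?_⟩
    · simp
    · intro n
      refine ⟨J, hJ, ?_⟩
      show h ++ List.replicate (n+1) J = (h ++ List.replicate n J) ++ [J]
      rw [List.replicate_succ', ← List.append_assoc]
    · show K.label (h ++ List.replicate 1 J) ∩ (I₁ ∪ I₂) = J
      have hg : (h ++ List.replicate 1 J).getLast? = some J := by
        simp [List.replicate]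
      rw [hlab, hg]
      simp only [Option.getD_some]
      rw [lab_in _ _ _ _ _ (le_refl _) (hf₁I _) (hf₂I _)]
      exact Set.inter_eq_left.mpr hJ
  · -- ψ₃
    intro π hπ π' hπ'
    -- structure of paths: each step appends an input valuation
    have hstep : ∀ (ρ : ℕ → List (Set AP) × Set AP),
        ρ ∈ PathsFrom K K.init → ∀ n,
        ∃ J, J ⊆ I₁ ∪ I₂ ∧ (ρ (n+1)).1 = (ρ n).1 ++ [J] := by
      intro ρ hρ n
      exact hρ.2.1 n
    -- label intersected with Iₖ equals last input intersected with Iₖ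
    have hlabI : ∀ (I : Set AP), I ⊆ I₁ ∪ I₂ →
        ∀ (ρ : ℕ → List (Set AP) × Set AP), ρ ∈ PathsFrom K K.init → ∀ n,
        (ρ n).2 ∩ I = ((ρ n).1.getLast?.getD ∅) ∩ I := by
      intro I hI ρ hρ n
      rw [hρ.2.2 n, hlab]
      exact lab_in _ _ _ _ _ hI
        (fun x hx hx' => hf₁I _ x hx (hI hx'))
        (fun x hx hx' => hf₂I _ x hx (hI hx'))
    -- main history argument
    have hhist : ∀ (I : Set AP), I ⊆ I₁ ∪ I₂ →
        (∀ i, (π i).2 ∩ I = (π' i).2 ∩ I) →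
        ∀ n, ((π n).1).map (· ∩ I) = ((π' n).1).map (· ∩ I) := by
      intro I hI heq n
      induction n with
      | zero => rw [hπ.1, hπ'.1]
      | succ n ih =>
        obtain ⟨J, hJ, hJeq⟩ := hstep π hπ n
        obtain ⟨J', hJ', hJeq'⟩ := hstep π' hπ' n
        have h1 : (π (n+1)).2 ∩ I = J ∩ I := by
          rw [hlabI I hI π hπ (n+1), hJeq, List.getLast?_concat]; rfl
        have h2 : (π' (n+1)).2 ∩ I = J' ∩ I := by
          rw [hlabI I hI π' hπ' (n+1), hJeq', List.getLast?_concat]; rfl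
        have hJJ' : J ∩ I = J' ∩ I := by
          rw [← h1, ← h2, heq (n+1)]
        rw [hJeq, hJeq', List.map_append, List.map_append, ih]
        simp [hJJ']
    constructor
    · -- component 1
      intro heq i
      have e1 : (π i).2 ∩ O₁ = f₁ ((π i).1) := by
        rw [hπ.2.2 i, hlab]
        exact lab_out _ _ _ _ _
          hIO₁
          (hf₁O _)
          (fun x hx hx' => Set.disjoint_left.mp hO hx' (hf₂O _ hx))
      have e2 : (π' i).2 ∩ O₁ = f₁ ((π' i).1) := by
        rw [hπ'.2.2 i, hlab]
        exact lab_out _ _ _ _ _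
          hIO₁
          (hf₁O _)
          (fun x hx hx' => Set.disjoint_left.mp hO hx' (hf₂O _ hx))
      rw [e1, e2]
      exact hf₁ _ _ (hhist I₁ Set.subset_union_left heq i)
    · -- component 2
      intro heq i
      have key : ∀ h : List (Set AP), K.label h ∩ O₂ = f₂ h := by
        intro h
        rw [hlab]
        have : (h.getLast?.getD ∅) ∩ (I₁ ∪ I₂) ∪ f₁ h ∪ f₂ h
            = (h.getLast?.getD ∅) ∩ (I₁ ∪ I₂) ∪ f₂ h ∪ f₁ h := by
          rw [Set.union_assoc, Set.union_assoc, Set.union_comm (f₁ h)]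
        rw [this]
        exact lab_out _ _ _ _ _
          hIO₂
          (hf₂O _)
          (fun x hx hx' => Set.disjoint_left.mp hO (hf₁O _ hx) hx')
      have e1 : (π i).2 ∩ O₂ = f₂ ((π i).1) := by rw [hπ.2.2 i]; exact key _
      have e2 : (π' i).2 ∩ O₂ = f₂ ((π' i).1) := by rw [hπ'.2.2 i]; exact key _
      rw [e1, e2]
      exact hf₂ _ _ (hhist I₂ Set.subset_union_right heq i)
end
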